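/- Let H be a Hopf algebra acting on a quadratic H-module algebra A = T(V)/(R) by degree-preserving endomorphisms, and let μ be a counital 2-cocycle of H. Then the Drinfeld twist A_μ is generated as an algebra by its degree-1 subspace V = A₁: every homogeneous element of A_μ of degree n ≥ 1 is a linear combination of m_μ-products of n elements of V. -/

import Mathlib

noncomputable section
namespace DrinfeldTwist
open TensorProduct

universe u v

variable (k : Type u) [CommRing k]

/-! ### Tensor-square helper maps for a Hopf algebra -/

section Hopf
variable (H : Type v) [Ring H] [HopfAlgebra k H]

/-- `a ⊗ b ↦ a ⊗ b ⊗ 1` (legs 1,2 of the triple tensor product). -/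
def incl12 : H ⊗[k] H →ₐ[k] H ⊗[k] (H ⊗[k] H) :=
  Algebra.TensorProduct.map (AlgHom.id k H) Algebra.TensorProduct.includeLeft

/-- `a ⊗ b ↦ 1 ⊗ a ⊗ b` (legs 2,3). -/
def incl23 : H ⊗[k] H →ₐ[k] H ⊗[k] (H ⊗[k] H) :=
  Algebra.TensorProduct.includeRight

/-- `a ⊗ b ↦ a ⊗ 1 ⊗ b` (legs 1,3). -/
def incl13 : H ⊗[k] H →ₐ[k] H ⊗[k] (H ⊗[k] H) :=
  Algebra.TensorProduct.map (AlgHom.id k H) Algebra.TensorProduct.includeRight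

/-- `Δ ⊗ id`, with values in `H ⊗ (H ⊗ H)`. -/
def comulLeft : H ⊗[k] H →ₗ[k] H ⊗[k] (H ⊗[k] H) :=
  (TensorProduct.assoc k H H H).toLinearMap ∘ₗ
    TensorProduct.map (Coalgebra.comul (R := k)) LinearMap.id

/-- `id ⊗ Δ`. -/
def comulRight : H ⊗[k] H →ₗ[k] H ⊗[k] (H ⊗[k] H) :=
  TensorProduct.map LinearMap.id (Coalgebra.comul (R := k))

/-- `ε ⊗ id : H ⊗ H → H`. -/
def counitLeft : H ⊗[k] H →ₗ[k] H :=
  (TensorProduct.lid k H).toLinearMap ∘ₗ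
    TensorProduct.map (Coalgebra.counit (R := k)) LinearMap.id

/-- `id ⊗ ε : H ⊗ H → H`. -/
def counitRight : H ⊗[k] H →ₗ[k] H :=
  (TensorProduct.rid k H).toLinearMap ∘ₗ
    TensorProduct.map LinearMap.id (Coalgebra.counit (R := k))

variable {k H} in
/-- `μ` is a counital 2-cocycle on the Hopf algebra `H`, with inverse `μinv`:
it is invertible, satisfies `(μ⊗1)·(Δ⊗id)(μ) = (1⊗μ)·(id⊗Δ)(μ)` and
`(ε⊗id)(μ) = 1 = (id⊗ε)(μ)`. -/
structure IsCounitalCocycle (μ μinv : H ⊗[k] H) : Prop where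
  mul_inv : μ * μinv = 1
  inv_mul : μinv * μ = 1
  cocycle : incl12 k H μ * comulLeft k H μ = incl23 k H μ * comulRight k H μ
  counit_left : counitLeft k H μ = 1
  counit_right : counitRight k H μ = 1

end Hopf

/-! ### Module algebras -/

section MA
variable (H : Type v) [Ring H] [HopfAlgebra k H]
variable (A : Type u) [Ring A] [Algebra k A]

/-- The canonical algebra map `End(M) ⊗ End(N) → End(M ⊗ N)`. -/
def tensorEnd {M N : Type*} [AddCommGroup M] [Module k M] [AddCommGroup N] [Module k N] :
    (Module.End k M) ⊗[k] (Module.End k N) →ₐ[k] Module.End k (M ⊗[k] N) :=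
  Module.endTensorEndAlgHom

/-- An `H`-module algebra structure on a `k`-algebra `A`: an action of `H` by
`k`-linear endomorphisms (an algebra map `H → End A`) such that
`h ▷ (a * b) = (h⁽¹⁾ ▷ a) * (h⁽²⁾ ▷ b)` and `h ▷ 1 = ε(h) • 1`. -/
structure ModuleAlgebra : Type (max u v) where
  act : H →ₐ[k] Module.End k A
  act_mul : ∀ (h : H) (a b : A),
    act h (a * b) = LinearMap.mul' k A
      (((tensorEnd k).comp (Algebra.TensorProduct.map act act)) (Coalgebra.comul (R := k) h)
        (a ⊗ₜ[k] b))
  act_one : ∀ h : H, act h 1 = Coalgebra.counit (R := k) h • (1 : A)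

variable {k H A}

/-- The action of an element of `H ⊗ H` on `A ⊗ A`. -/
def ModuleAlgebra.act2 (ma : ModuleAlgebra k H A) : H ⊗[k] H →ₐ[k] Module.End k (A ⊗[k] A) :=
  (tensorEnd k).comp (Algebra.TensorProduct.map ma.act ma.act)

/-- The twisted product `m_ν(a ⊗ b) = m(ν ▷ (a ⊗ b))` (used with `ν = μ⁻¹` for the
Drinfeld twist). -/
def ModuleAlgebra.twProd (ma : ModuleAlgebra k H A) (ν : H ⊗[k] H) : A ⊗[k] A →ₗ[k] A :=
  LinearMap.mul' k A ∘ₗ (ma.act2 ν)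

/-- The action of `H` preserves each graded component. -/
def ModuleAlgebra.DegreePreserving (ma : ModuleAlgebra k H A) (𝒜 : ℕ → Submodule k A) : Prop :=
  ∀ (h : H) (i : ℕ), (𝒜 i).map (ma.act h) ≤ 𝒜 i

end MA

section Quad
variable {A B : Type*} [Ring A] [Algebra k A] [Ring B] [Algebra k B]

/-- The two-sided ideal generated by a set, as an `Ideal` (it is
two-sided by construction since the generating set is closed under outer products). -/
def twoSidedSpan {T : Type*} [Ring T] (S : Set T) : Ideal T :=
  Ideal.span {x | ∃ a s b, s ∈ S ∧ x = a * s * b}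

/-- The embedding of `V ⊗ V` as the degree-two part of the tensor algebra `T(V)`. -/
def degTwoIncl (V : Submodule k A) : (V ⊗[k] V) →ₗ[k] TensorAlgebra k V :=
  LinearMap.mul' k (TensorAlgebra k V) ∘ₗ
    TensorProduct.map (TensorAlgebra.ι k) (TensorAlgebra.ι k)

/-- `B` is presented, via the linear map `f : A → B`, as the quadratic algebra
`T(V)/(R)` on the subspace `V ⊆ A` with relations `R ⊆ V ⊗ V`: the canonical
algebra map `T(V) → B` induced by `f` is surjective with kernel the two-sided
ideal generated by `R`. -/
def IsQuadraticPresentation (V : Submodule k A) (f : A →ₗ[k] B)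
    (R : Submodule k (V ⊗[k] V)) : Prop :=
  Function.Surjective (TensorAlgebra.lift k (f ∘ₗ V.subtype) : TensorAlgebra k V →ₐ[k] B) ∧
    RingHom.ker (TensorAlgebra.lift k (f ∘ₗ V.subtype) : TensorAlgebra k V →ₐ[k] B) =
      twoSidedSpan ((degTwoIncl k V) '' (R : Set (V ⊗[k] V)))

/-- A quadratic algebra: a connected ℕ-graded, locally finite-dimensional `k`-algebra
`A`, generated by `V = 𝒜 1` with relations `R ⊆ V ⊗ V`, i.e. `A = T(V)/(R)`. -/
structure QuadraticAlgebra (𝒜 : ℕ → Submodule k A)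
    (R : Submodule k ((𝒜 1) ⊗[k] (𝒜 1))) : Prop where
  graded : SetLike.GradedMonoid 𝒜
  internal : DirectSum.IsInternal 𝒜
  connected : 𝒜 0 = Submodule.span k {(1 : A)}
  locallyFinite : ∀ i, Module.Finite k (𝒜 i)
  presentation : IsQuadraticPresentation k (𝒜 1) LinearMap.id R

end Quad

section Twist
variable {H : Type v} [Ring H] [HopfAlgebra k H]
variable {A B : Type u} [Ring A] [Algebra k A] [Ring B] [Algebra k B]

variable {k}

/-- The twisted space of relations `R_μ = { μ ▷ r | r ∈ R } ⊆ V ⊗ V`, where `H ⊗ H` acts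
componentwise on `A ⊗ A` (this is a subspace of `V ⊗ V` whenever the `H`-action is
degree-preserving). -/
def ModuleAlgebra.relTwist (ma : ModuleAlgebra k H A) (μ : H ⊗[k] H)
    (V : Submodule k A) (R : Submodule k (V ⊗[k] V)) : Submodule k (V ⊗[k] V) :=
  Submodule.comap (TensorProduct.map V.subtype V.subtype)
    (Submodule.map (ma.act2 μ)
      (Submodule.map (TensorProduct.map V.subtype V.subtype) R))

/-- `B`, together with the linear equivalence `e : A ≃ B`, is the Drinfeld twist of the
`H`-module algebra `A` by the 2-cocycle with inverse `μinv`: `B` has the same underlying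
vector space as `A`, the same unit, and product `m_μ(a ⊗ b) = m(μ⁻¹ ▷ (a ⊗ b))`. -/
structure IsDrinfeldTwist (ma : ModuleAlgebra k H A) (μinv : H ⊗[k] H)
    (e : A ≃ₗ[k] B) : Prop where
  map_one : e 1 = 1
  map_mul : ∀ a b : A, e a * e b = e (ma.twProd μinv (a ⊗ₜ[k] b))

end Twist

end DrinfeldTwist

namespace DrinfeldTwist
variable {k : Type u} [CommRing k] {A : Type*} [Ring A] [Algebra k A]

/-- `genPow V p n` is the span of all `p`-products (right-nested) of `n + 1` elements
of `V`; for `p` the twisted product this is the space of linear combinations of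
`m_μ`-products of `n + 1` elements of `V`. -/
def genPow (V : Submodule k A) (p : A → A → A) : ℕ → Submodule k A
  | 0 => V
  | n + 1 => Submodule.span k {x | ∃ v ∈ (V : Set A), ∃ w ∈ genPow V p n, x = p v w}

end DrinfeldTwist


namespace DrinfeldTwist
open TensorProduct

section AuxProof
variable {k : Type u} [CommRing k] {A : Type u} [Ring A] [Algebra k A]

theorem grade_le_pow (𝒜 : ℕ → Submodule k A)
    {R : Submodule k ((𝒜 1) ⊗[k] (𝒜 1))}
    (hquad : QuadraticAlgebra k 𝒜 R) (m : ℕ) : 𝒜 (m + 1) ≤ (𝒜 1) ^ (m + 1) := by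
  haveI : SetLike.GradedMonoid 𝒜 := hquad.graded
  have hpow : ∀ j, (𝒜 1 : Submodule k A) ^ j ≤ 𝒜 j := by
    intro j
    induction j with
    | zero => rw [pow_zero, hquad.connected, Submodule.one_eq_span]
    | succ j ih =>
        rw [pow_succ]
        exact Submodule.mul_le.2 fun a ha b hb => SetLike.mul_mem_graded (ih ha) hb
  set S : Submodule k A := ⨆ j, (𝒜 1) ^ j with hSdef
  have hSmul : ∀ x ∈ S, ∀ y ∈ S, x * y ∈ S := by
    have hss : S * S ≤ S := by
      rw [hSdef, Submodule.iSup_mul]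
      refine iSup_le fun i => ?_
      rw [Submodule.mul_iSup]
      refine iSup_le fun j => ?_
      rw [← pow_add]
      exact le_iSup _ (i + j)
    exact fun x hx y hy => hss (Submodule.mul_mem_mul hx hy)
  have hS : ∀ a : A, a ∈ S := by
    intro a
    obtain ⟨t, rfl⟩ := hquad.presentation.1 a
    induction t using TensorAlgebra.induction with
    | algebraMap r =>
        rw [AlgHom.commutes, Algebra.algebraMap_eq_smul_one]
        have h1 : (1 : A) ∈ (𝒜 1 : Submodule k A) ^ (0 : ℕ) := by
          rw [pow_zero]; exact Submodule.one_le.1 le_rfl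
        exact Submodule.smul_mem _ _ (le_iSup (fun j => (𝒜 1) ^ j) 0 h1)
    | ι v =>
        rw [TensorAlgebra.lift_ι_apply]
        have h1 : (↑v : A) ∈ (𝒜 1 : Submodule k A) ^ (1 : ℕ) := by
          rw [pow_one]; exact v.2
        exact le_iSup (fun j => (𝒜 1) ^ j) 1 h1
    | mul x y hx hy => rw [map_mul]; exact hSmul _ hx _ hy
    | add x y hx hy => rw [map_add]; exact S.add_mem hx hy
  intro x hx
  have hsplit : S ≤ (𝒜 1) ^ (m + 1) ⊔ ⨆ j, ⨆ (_ : j ≠ m + 1), (𝒜 1) ^ j := by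
    refine iSup_le fun j => ?_
    by_cases h : j = m + 1
    · subst h; exact le_sup_left
    · exact le_sup_of_le_right (le_iSup₂ (f := fun j (_ : j ≠ m + 1) => (𝒜 1) ^ j) j h)
  obtain ⟨y, hy, z, hz, hxyz⟩ := Submodule.mem_sup.1 (hsplit (hS x))
  have hz2 : z ∈ ⨆ j, ⨆ (_ : j ≠ m + 1), 𝒜 j :=
    (iSup_mono fun j => iSup_mono fun _ => hpow j) hz
  have hz1 : z ∈ 𝒜 (m + 1) := by
    have hzz : z = x - y := by rw [← hxyz, add_sub_cancel_left]
    rw [hzz]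
    exact Submodule.sub_mem _ hx (hpow (m + 1) hy)
  have hz0 : z = 0 :=
    Submodule.disjoint_def.1 (hquad.internal.submodule_iSupIndep (m + 1)) z hz1 hz2
  rw [← hxyz, hz0, add_zero]
  exact hy

end AuxProof
end DrinfeldTwist

open DrinfeldTwist TensorProduct in
/-- The Drinfeld twist `A_μ` of a quadratic `H`-module algebra
(degree-preserving action, `μ` a counital 2-cocycle) is generated in degree one:
every homogeneous element of degree `n ≥ 1` is a linear combination of
`m_μ`-products of `n` elements of `V = 𝒜 1`. -/
theorem drinfeld_twist_generated_in_degree_one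
    {k : Type u} [Field k] {H : Type v} [Ring H] [HopfAlgebra k H]
    {A : Type u} [Ring A] [Algebra k A]
    (ma : ModuleAlgebra k H A)
    (𝒜 : ℕ → Submodule k A) (R : Submodule k ((𝒜 1) ⊗[k] (𝒜 1)))
    (hquad : QuadraticAlgebra k 𝒜 R)
    (hdeg : ma.DegreePreserving 𝒜)
    (μ μinv : H ⊗[k] H) (hμ : IsCounitalCocycle μ μinv) :
    ∀ n : ℕ, 𝒜 (n + 1) ≤
      genPow (𝒜 1) (fun a b => ma.twProd μinv (a ⊗ₜ[k] b)) n := by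
  haveI : SetLike.GradedMonoid 𝒜 := hquad.graded
  have hpow : ∀ j, (𝒜 1 : Submodule k A) ^ j ≤ 𝒜 j := by
    intro j
    induction j with
    | zero => rw [pow_zero, hquad.connected, Submodule.one_eq_span]
    | succ j ih =>
        rw [pow_succ]
        exact Submodule.mul_le.2 fun a ha b hb => SetLike.mul_mem_graded (ih ha) hb
  intro n
  induction n with
  | zero => exact le_rfl
  | succ n ih =>
    have h1 : 𝒜 (n + 1 + 1) ≤ (𝒜 1) * (𝒜 (n + 1)) := by
      refine (grade_le_pow 𝒜 hquad (n + 1)).trans ?_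
      rw [pow_succ']
      exact mul_le_mul_right (hpow (n + 1)) _
    refine h1.trans (Submodule.mul_le.2 fun v hv w hw => ?_)
    -- the span of pure tensors from `𝒜 1 ⊗ 𝒜 (n+1)` inside `A ⊗ A`
    set G : Set (A ⊗[k] A) :=
      {x | ∃ a ∈ 𝒜 1, ∃ b ∈ 𝒜 (n + 1), x = a ⊗ₜ[k] b} with hGdef
    set S2 : Submodule k (A ⊗[k] A) := Submodule.span k G with hS2def
    have hact : ∀ t : H ⊗[k] H, ma.act2 t (v ⊗ₜ[k] w) ∈ S2 := by
      intro t
      induction t using TensorProduct.induction_on with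
      | zero => rw [map_zero]; exact S2.zero_mem
      | tmul h g =>
          have heq : ma.act2 (h ⊗ₜ[k] g) (v ⊗ₜ[k] w)
              = (ma.act h v) ⊗ₜ[k] (ma.act g w) := by
            simp only [ModuleAlgebra.act2, tensorEnd, AlgHom.comp_apply,
              Algebra.TensorProduct.map_tmul, Module.endTensorEndAlgHom_apply,
              TensorProduct.map_tmul, TensorProduct.AlgebraTensorModule.map_tmul]
          rw [heq]
          exact Submodule.subset_span
            ⟨_, hdeg h 1 ⟨v, hv, rfl⟩, _, hdeg g (n + 1) ⟨w, hw, rfl⟩, rfl⟩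
      | add a b ha hb =>
          rw [map_add, LinearMap.add_apply]
          exact S2.add_mem ha hb
    have key : v * w = ma.twProd μinv (ma.act2 μ (v ⊗ₜ[k] w)) := by
      unfold ModuleAlgebra.twProd
      rw [LinearMap.comp_apply]
      have hinv : ma.act2 μinv (ma.act2 μ (v ⊗ₜ[k] w)) = v ⊗ₜ[k] w := by
        rw [← Module.End.mul_apply, ← map_mul, hμ.inv_mul, map_one, Module.End.one_apply]
      rw [hinv, LinearMap.mul'_apply]
    rw [key]
    have hle : S2 ≤ Submodule.comap (ma.twProd μinv)
        (genPow (𝒜 1) (fun a b => ma.twProd μinv (a ⊗ₜ[k] b)) (n + 1)) := by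
      rw [hS2def, Submodule.span_le]
      rintro x ⟨a, ha, b, hb, rfl⟩
      exact Submodule.subset_span ⟨a, ha, _, ih hb, rfl⟩
    exact hle (hact μ)
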